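/- arXiv:2409.01016 — 7 statements merged into one kernel-verified Lean document; each statement's English description precedes it below -/
import Mathlib

section
/- If G is a simple S_{2,4}-free graph with minimum degree at least 3, then the maximum degree of G is at most 6. -/
/-- `G` contains the double star `S_{2,4}`: an edge `x y`, two further neighbors of `x`,
four further neighbors of `y`, all eight vertices distinct. -/
def ContainsS24 {V : Type*} (G : SimpleGraph V) : Prop :=
  ∃ x y a b c d e f : V, G.Adj x y ∧ G.Adj x a ∧ G.Adj x b ∧
    G.Adj y c ∧ G.Adj y d ∧ G.Adj y e ∧ G.Adj y f ∧
    ([x, y, a, b, c, d, e, f] : List V).Nodup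

theorem stmt_0 {V : Type*} [Fintype V] [DecidableEq V] (G : SimpleGraph V)
    [DecidableRel G.Adj] (hfree : ¬ ContainsS24 G)
    (hmin : ∀ v : V, 3 ≤ G.degree v) :
    ∀ v : V, G.degree v ≤ 6 := by
  intro v
  by_contra h
  push_neg at h
  have hv7 : 7 ≤ (G.neighborFinset v).card := by
    have := G.card_neighborFinset_eq_degree v
    omega
  obtain ⟨x, hx⟩ : (G.neighborFinset v).Nonempty := Finset.card_pos.mp (by omega)
  have hvx : G.Adj v x := by simpa using hx
  -- neighbors of x other than v
  set s1 := (G.neighborFinset x).erase v with hs1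
  have hs1card : 2 ≤ s1.card := by
    rw [hs1, Finset.card_erase_of_mem (show v ∈ G.neighborFinset x by
      simp [G.adj_symm hvx])]
    have h3 := hmin x
    have := G.card_neighborFinset_eq_degree x
    omega
  obtain ⟨a, ha⟩ : s1.Nonempty := Finset.card_pos.mp (by omega)
  obtain ⟨b, hb⟩ : (s1.erase a).Nonempty := by
    apply Finset.card_pos.mp
    have := Finset.pred_card_le_card_erase (a := a) (s := s1)
    omega
  have hba : b ≠ a := (Finset.mem_erase.mp hb).1
  have hb1 : b ∈ s1 := (Finset.mem_erase.mp hb).2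
  have hav : a ≠ v := (Finset.mem_erase.mp ha).1
  have hxa : G.Adj x a := by
    have := (Finset.mem_erase.mp ha).2
    simpa using this
  have hbv : b ≠ v := (Finset.mem_erase.mp hb1).1
  have hxb : G.Adj x b := by
    have := (Finset.mem_erase.mp hb1).2
    simpa using this
  -- neighbors of v other than x, a, b
  set t := (G.neighborFinset v) \ {x, a, b} with ht
  have htcard : 4 ≤ t.card := by
    rw [ht]
    have h1 := Finset.le_card_sdiff ({x, a, b} : Finset V) (G.neighborFinset v)
    have h2 := Finset.card_insert_le x (insert a ({b} : Finset V))
    have h3 := Finset.card_insert_le a ({b} : Finset V)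
    simp only [Finset.card_singleton] at h2 h3
    omega
  obtain ⟨c, hc⟩ : t.Nonempty := Finset.card_pos.mp (by omega)
  obtain ⟨d, hd⟩ : (t.erase c).Nonempty := by
    apply Finset.card_pos.mp
    have := Finset.pred_card_le_card_erase (a := c) (s := t)
    omega
  obtain ⟨e, he⟩ : ((t.erase c).erase d).Nonempty := by
    apply Finset.card_pos.mp
    have h1 := Finset.pred_card_le_card_erase (a := c) (s := t)
    have h2 := Finset.pred_card_le_card_erase (a := d) (s := t.erase c)
    omega
  obtain ⟨f, hf⟩ : (((t.erase c).erase d).erase e).Nonempty := by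
    apply Finset.card_pos.mp
    have h1 := Finset.pred_card_le_card_erase (a := c) (s := t)
    have h2 := Finset.pred_card_le_card_erase (a := d) (s := t.erase c)
    have h3 := Finset.pred_card_le_card_erase (a := e) (s := (t.erase c).erase d)
    omega
  have hdc : d ≠ c := (Finset.mem_erase.mp hd).1
  have hdt : d ∈ t := (Finset.mem_erase.mp hd).2
  have hed : e ≠ d := (Finset.mem_erase.mp he).1
  have hec : e ≠ c := (Finset.mem_erase.mp (Finset.mem_erase.mp he).2).1
  have het : e ∈ t := (Finset.mem_erase.mp (Finset.mem_erase.mp he).2).2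
  have hfe : f ≠ e := (Finset.mem_erase.mp hf).1
  have hfd : f ≠ d := (Finset.mem_erase.mp (Finset.mem_erase.mp hf).2).1
  have hfc : f ≠ c := (Finset.mem_erase.mp (Finset.mem_erase.mp (Finset.mem_erase.mp hf).2).2).1
  have hft : f ∈ t := (Finset.mem_erase.mp (Finset.mem_erase.mp (Finset.mem_erase.mp hf).2).2).2
  have tmem : ∀ z ∈ t, G.Adj v z ∧ z ≠ x ∧ z ≠ a ∧ z ≠ b := by
    intro z hz
    rw [ht, Finset.mem_sdiff] at hz
    have h1 : G.Adj v z := by simpa using hz.1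
    have h2 := hz.2
    simp at h2
    tauto
  obtain ⟨hvc, hcx, hca, hcb⟩ := tmem c hc
  obtain ⟨hvd, hdx, hda, hdb⟩ := tmem d hdt
  obtain ⟨hve, hex, hea, heb⟩ := tmem e het
  obtain ⟨hvf, hfx, hfa, hfb⟩ := tmem f hft
  apply hfree
  refine ⟨x, v, a, b, c, d, e, f, hvx.symm, hxa, hxb, hvc, hvd, hve, hvf, ?_⟩
  have hax : a ≠ x := fun h => by subst h; exact G.irrefl hxa
  have hbx : b ≠ x := fun h => by subst h; exact G.irrefl hxb
  have hcv : c ≠ v := hvc.ne'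
  have hdv : d ≠ v := hvd.ne'
  have hev : e ≠ v := hve.ne'
  have hfv : f ≠ v := hvf.ne'
  have hxv : x ≠ v := hvx.ne'
  simp only [List.nodup_cons, List.mem_cons, List.not_mem_nil, List.nodup_nil, or_false,
    not_or, and_true]
  refine ⟨⟨?_, ?_, ?_, ?_, ?_, ?_, ?_⟩, ⟨?_, ?_, ?_, ?_, ?_, ?_⟩, ⟨?_, ?_, ?_, ?_, ?_⟩,
    ⟨?_, ?_, ?_, ?_⟩, ⟨?_, ?_, ?_⟩, ⟨?_, ?_⟩, ?_⟩ <;>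
    first
      | assumption
      | (apply Ne.symm; assumption)
      | exact ⟨fun h => hfe h.symm, not_false⟩
end

section
/- If G is a simple S_{2,4}-free graph with minimum degree at least 3, and v is a vertex of degree 6 in G, then there is no edge between the closed neighborhood N[v] and the rest of the graph; that is, G[N[v]] is a union of connected components of G. -/
/-!
If a neighbour `a` of `v` had a neighbour `b` outside `N[v]`, then `a` (of degree at least 3) has a
third neighbour `c ∉ {v, b}`, and `v` has at least `6 - 2 = 4` neighbours outside `{a, c}`, none of
them equal to `b`. Together with the leaves `b, c` at `a` these form an `S_{2,4}` on the edge `a v`.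
-/

open Finset

namespace SimpleGraph

variable {V : Type*} [DecidableEq V] {G : SimpleGraph V}

lemma containsS24_of_adj {x y : V} (hxy : G.Adj x y) {A B : Finset V}
    (hA : ∀ a ∈ A, G.Adj x a) (hB : ∀ b ∈ B, G.Adj y b) (hA2 : 2 ≤ #A) (hB4 : 4 ≤ #B)
    (hAB : Disjoint A B) (hyA : y ∉ A) (hxB : x ∉ B) : ContainsS24 G := by
  obtain ⟨A', hA'A, hA'⟩ := exists_subset_card_eq hA2
  obtain ⟨B', hB'B, hB'⟩ := exists_subset_card_eq hB4
  obtain ⟨a, b, hab, rfl⟩ := card_eq_two.mp hA'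
  obtain ⟨c, T, hcT, rfl, hT⟩ := card_eq_succ.mp hB'
  obtain ⟨d, e, f, hde, hdf, hef, rfl⟩ := card_eq_three.mp hT
  have hxa := hA a (hA'A (by simp))
  have hxb := hA b (hA'A (by simp))
  have hyc := hB c (hB'B (by simp))
  have hyd := hB d (hB'B (by simp))
  have hye := hB e (hB'B (by simp))
  have hyf := hB f (hB'B (by simp))
  refine ⟨x, y, a, b, c, d, e, f, hxy, hxa, hxb, hyc, hyd, hye, hyf, ?_⟩
  have hAB' := hAB.mono hA'A hB'B
  have hyA' : y ∉ ({a, b} : Finset V) := fun h => hyA (hA'A h)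
  have hxB' : x ∉ insert c {d, e, f} := fun h => hxB (hB'B h)
  simp only [disjoint_insert_right, disjoint_singleton_right, mem_insert,
    mem_singleton] at hAB' hcT hyA' hxB'
  simp only [List.nodup_cons, List.mem_cons, List.not_mem_nil, List.nodup_nil]
  grind [hxy.ne, hxa.ne, hxb.ne, hyc.ne, hyd.ne, hye.ne, hyf.ne]

lemma exists_adj_ne_ne_of_three_le_degree {a : V} [Fintype (G.neighborSet a)]
    (ha : 3 ≤ G.degree a) (u w : V) : ∃ c, G.Adj a c ∧ c ≠ u ∧ c ≠ w := by
  have hcard : #{u, w} < #(G.neighborFinset a) := by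
    rw [card_neighborFinset_eq_degree]
    exact card_le_two.trans_lt ha
  obtain ⟨c, hac, hc⟩ := exists_mem_notMem_of_card_lt_card hcard
  simp only [mem_insert, mem_singleton, not_or, mem_neighborFinset] at hac hc
  exact ⟨c, hac, hc⟩

end SimpleGraph

open Finset SimpleGraph in
theorem stmt_1 {V : Type*} [Fintype V] [DecidableEq V] (G : SimpleGraph V)
    [DecidableRel G.Adj] (hfree : ¬ ContainsS24 G)
    (hmin : ∀ x : V, 3 ≤ G.degree x) (v : V) (hv : G.degree v = 6) :
    ∀ a b : V, a ∈ insert v (G.neighborSet v) → b ∉ insert v (G.neighborSet v) →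
      ¬ G.Adj a b := by
  intro a b ha hb hab
  have hbv : b ≠ v := fun h => hb (h ▸ Set.mem_insert _ _)
  have hvb : ¬ G.Adj v b := fun h => hb (Set.mem_insert_of_mem _ h)
  have hva : G.Adj v a := by
    rcases ha with rfl | ha
    · exact absurd hab hvb
    · exact ha
  obtain ⟨c, hac, hcv, hcb⟩ := exists_adj_ne_ne_of_three_le_degree (hmin a) v b
  refine hfree (containsS24_of_adj hva.symm (A := {b, c}) (B := G.neighborFinset v \ {a, c})
    ?_ ?_ (card_pair hcb.symm).ge ?_ ?_ ?_ ?_)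
  · simp [hab, hac]
  · simp +contextual
  · calc 4 = G.degree v - #{a, c} := by rw [hv, card_pair hac.ne]
      _ ≤ _ := by rw [← card_neighborFinset_eq_degree]; exact le_card_sdiff _ _
  · simp [hvb]
  · simp [hbv.symm, hcv.symm]
  · simp
end

section
/- Let G be a simple S_{2,4}-free graph with minimum degree at least 3, and let uv be an edge of G with deg(u) = deg(v) = 5. Then u and v have at least 3 common neighbors. -/
theorem stmt_2 {V : Type*} [Fintype V] [DecidableEq V] (G : SimpleGraph V)
    [DecidableRel G.Adj] (hfree : ¬ ContainsS24 G)
    (hmin : ∀ x : V, 3 ≤ G.degree x) (u v : V) (huv : G.Adj u v)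
    (hu : G.degree u = 5) (hv : G.degree v = 5) :
    3 ≤ (G.neighborFinset u ∩ G.neighborFinset v).card := by
  by_contra hlt
  push_neg at hlt
  have hcap : (G.neighborFinset u ∩ G.neighborFinset v).card ≤ 2 := by omega
  apply hfree
  set Nu := G.neighborFinset u with hNu
  set Nv := G.neighborFinset v with hNv
  -- T : neighbors of u outside {v} ∪ N(v)
  set T := Nu \ insert v Nv with hT
  have hTcard : 2 ≤ T.card := by
    have h1 : T.card + (Nu ∩ insert v Nv).card = Nu.card :=
      Finset.card_sdiff_add_card_inter Nu (insert v Nv)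
    have h2 : Nu ∩ insert v Nv ⊆ insert v (Nu ∩ Nv) := by
      intro x hx
      simp only [Finset.mem_inter, Finset.mem_insert] at hx ⊢
      tauto
    have h3 : (Nu ∩ insert v Nv).card ≤ 3 := by
      calc (Nu ∩ insert v Nv).card ≤ (insert v (Nu ∩ Nv)).card := Finset.card_le_card h2
        _ ≤ (Nu ∩ Nv).card + 1 := Finset.card_insert_le _ _
        _ ≤ 3 := by omega
    have h4 : Nu.card = 5 := hu
    omega
  obtain ⟨a, ha, b, hb, hab⟩ := Finset.one_lt_card.mp (by omega : 1 < T.card)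
  -- S : neighbors of v other than u
  set S := Nv \ {u} with hS
  have huNv : u ∈ Nv := by
    rw [hNv, SimpleGraph.mem_neighborFinset]; exact huv.symm
  have hScard : S.card = 4 := by
    rw [hS, Finset.card_sdiff_of_subset (by simpa using huNv)]
    simp only [Finset.card_singleton]
    have : Nv.card = 5 := hv
    omega
  obtain ⟨c, hc⟩ := Finset.card_pos.mp (by omega : 0 < S.card)
  have h1 : ((S.erase c).card) = 3 := by rw [Finset.card_erase_of_mem hc]; omega
  obtain ⟨d, hd⟩ := Finset.card_pos.mp (by omega : 0 < (S.erase c).card)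
  have h2 : (((S.erase c).erase d).card) = 2 := by rw [Finset.card_erase_of_mem hd]; omega
  obtain ⟨e, he⟩ := Finset.card_pos.mp (by omega : 0 < ((S.erase c).erase d).card)
  have h3 : ((((S.erase c).erase d).erase e).card) = 1 := by
    rw [Finset.card_erase_of_mem he]; omega
  obtain ⟨f, hf⟩ := Finset.card_pos.mp
    (by omega : 0 < (((S.erase c).erase d).erase e).card)
  -- unpack memberships
  have hfe : f ≠ e := (Finset.mem_erase.mp hf).1
  have hf' := (Finset.mem_erase.mp hf).2
  have hed : e ≠ d := (Finset.mem_erase.mp he).1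
  have hfd : f ≠ d := (Finset.mem_erase.mp hf').1
  have he' := (Finset.mem_erase.mp he).2
  have hf'' := (Finset.mem_erase.mp hf').2
  have hdc : d ≠ c := (Finset.mem_erase.mp hd).1
  have hec : e ≠ c := (Finset.mem_erase.mp he').1
  have hfc : f ≠ c := (Finset.mem_erase.mp hf'').1
  have hdS : d ∈ S := (Finset.mem_erase.mp hd).2
  have heS : e ∈ S := (Finset.mem_erase.mp he').2
  have hfS : f ∈ S := (Finset.mem_erase.mp hf'').2
  have memS : ∀ x, x ∈ S → G.Adj v x ∧ x ≠ u := by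
    intro x hx
    rw [hS, Finset.mem_sdiff, Finset.mem_singleton, hNv, SimpleGraph.mem_neighborFinset] at hx
    exact hx
  obtain ⟨hvc, hcu⟩ := memS c hc
  obtain ⟨hvd, hdu⟩ := memS d hdS
  obtain ⟨hve, heu⟩ := memS e heS
  obtain ⟨hvf, hfu⟩ := memS f hfS
  have memT : ∀ x, x ∈ T → G.Adj u x ∧ x ≠ v ∧ ¬ G.Adj v x := by
    intro x hx
    rw [hT, Finset.mem_sdiff, Finset.mem_insert, hNu, hNv,
      SimpleGraph.mem_neighborFinset, SimpleGraph.mem_neighborFinset] at hx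
    push_neg at hx
    exact ⟨hx.1, hx.2.1, hx.2.2⟩
  obtain ⟨hua, hav, hanv⟩ := memT a ha
  obtain ⟨hub, hbv, hbnv⟩ := memT b hb
  refine ⟨u, v, a, b, c, d, e, f, huv, hua, hub, hvc, hvd, hve, hvf, ?_⟩
  have hau : a ≠ u := hua.ne'
  have hbu : b ≠ u := hub.ne'
  have hcv : c ≠ v := hvc.ne'
  have hdv : d ≠ v := hvd.ne'
  have hev : e ≠ v := hve.ne'
  have hfv : f ≠ v := hvf.ne'
  have hac : a ≠ c := fun h => hanv (h ▸ hvc)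
  have had : a ≠ d := fun h => hanv (h ▸ hvd)
  have hae : a ≠ e := fun h => hanv (h ▸ hve)
  have haf : a ≠ f := fun h => hanv (h ▸ hvf)
  have hbc : b ≠ c := fun h => hbnv (h ▸ hvc)
  have hbd : b ≠ d := fun h => hbnv (h ▸ hvd)
  have hbe : b ≠ e := fun h => hbnv (h ▸ hve)
  have hbf : b ≠ f := fun h => hbnv (h ▸ hvf)
  simp only [List.nodup_cons, List.mem_cons, List.not_mem_nil, List.mem_singleton,
    List.nodup_nil, or_false, not_or, and_true]
  refine ⟨⟨huv.ne, hau.symm, hbu.symm, hcu.symm, hdu.symm, heu.symm, hfu.symm⟩,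
    ⟨hav.symm, hbv.symm, hcv.symm, hdv.symm, hev.symm, hfv.symm⟩,
    ⟨hab, hac, had, hae, haf⟩, ⟨hbc, hbd, hbe, hbf⟩,
    ⟨hdc.symm, hec.symm, hfc.symm⟩, ⟨hed.symm, hfd.symm⟩, hfe.symm, not_false⟩
end

section
/- Let G be a simple S_{2,4}-free graph, and let uv be an edge with deg(u) = deg(v) = 5 such that u and v have exactly 4 common neighbors a_1, a_2, a_3, a_4. Then each a_i has at most one neighbor outside the set {u, v, a_1, a_2, a_3, a_4}. -/
lemma key_S24 {V : Type*} [Fintype V] [DecidableEq V] (G : SimpleGraph V) [DecidableRel G.Adj]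
    (hfree : ¬ ContainsS24 G) (u v b c d e : V)
    (huv : G.Adj u v) (hub : G.Adj u b) (huc : G.Adj u c) (hud : G.Adj u d) (hue : G.Adj u e)
    (hvb : G.Adj v b) (hvc : G.Adj v c) (hvd : G.Adj v d) (hve : G.Adj v e)
    (hbc : b ≠ c) (hbd : b ≠ d) (hbe : b ≠ e) (hcd : c ≠ d) (hce : c ≠ e) (hde : d ≠ e)
    (S : Finset V) (hS : ({u, v, b, c, d, e} : Finset V) ⊆ S) :
    (G.neighborFinset b \ S).card ≤ 1 := by
  by_contra h
  push_neg at h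
  obtain ⟨w₁, hw₁, w₂, hw₂, hww⟩ := Finset.one_lt_card.mp h
  rw [Finset.mem_sdiff, SimpleGraph.mem_neighborFinset] at hw₁ hw₂
  have hw₁S : w₁ ∉ S := hw₁.2
  have hw₂S : w₂ ∉ S := hw₂.2
  have hmem : ∀ x ∈ ({u, v, b, c, d, e} : Finset V), x ∈ S := fun x hx => hS hx
  simp only [Finset.mem_insert, Finset.mem_singleton, forall_eq_or_imp, forall_eq] at hmem
  apply hfree
  refine ⟨b, u, w₁, w₂, v, c, d, e, hub.symm, hw₁.1, hw₂.1, huv, huc, hud, hue, ?_⟩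
  have h1 : w₁ ≠ u := fun h => hw₁S (h ▸ hmem.1)
  have h2 : w₂ ≠ u := fun h => hw₂S (h ▸ hmem.1)
  have h3 : w₁ ≠ v := fun h => hw₁S (h ▸ hmem.2.1)
  have h4 : w₂ ≠ v := fun h => hw₂S (h ▸ hmem.2.1)
  have h5 : w₁ ≠ c := fun h => hw₁S (h ▸ hmem.2.2.2.1)
  have h6 : w₂ ≠ c := fun h => hw₂S (h ▸ hmem.2.2.2.1)
  have h7 : w₁ ≠ d := fun h => hw₁S (h ▸ hmem.2.2.2.2.1)
  have h8 : w₂ ≠ d := fun h => hw₂S (h ▸ hmem.2.2.2.2.1)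
  have h9 : w₁ ≠ e := fun h => hw₁S (h ▸ hmem.2.2.2.2.2)
  have h10 : w₂ ≠ e := fun h => hw₂S (h ▸ hmem.2.2.2.2.2)
  simp only [List.nodup_cons, List.mem_cons, List.not_mem_nil, or_false,
    List.mem_singleton, List.nodup_nil, and_true, not_or, not_false_iff]
  exact ⟨⟨hub.ne', hw₁.1.ne, hw₂.1.ne, hvb.ne', hbc, hbd, hbe⟩,
    ⟨h1.symm, h2.symm, huv.ne, huc.ne, hud.ne, hue.ne⟩,
    ⟨hww, h3, h5, h7, h9⟩, ⟨h4, h6, h8, h10⟩,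
    ⟨hvc.ne, hvd.ne, hve.ne⟩, ⟨hcd, hce⟩, hde⟩

set_option maxHeartbeats 1600000 in
theorem stmt_3 {V : Type*} [Fintype V] [DecidableEq V] (G : SimpleGraph V)
    [DecidableRel G.Adj] (hfree : ¬ ContainsS24 G)
    (u v a₁ a₂ a₃ a₄ : V) (huv : G.Adj u v)
    (hu : G.degree u = 5) (hv : G.degree v = 5)
    (hdist : ([a₁, a₂, a₃, a₄] : List V).Nodup)
    (hcommon : G.neighborFinset u ∩ G.neighborFinset v = {a₁, a₂, a₃, a₄}) :
    ∀ i ∈ ({a₁, a₂, a₃, a₄} : Finset V),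
      (G.neighborFinset i \ {u, v, a₁, a₂, a₃, a₄}).card ≤ 1 := by
  simp only [List.nodup_cons, List.mem_cons, List.not_mem_nil, or_false, List.mem_singleton,
    List.nodup_nil, and_true, not_or] at hdist
  obtain ⟨⟨h12, h13, h14⟩, ⟨h23, h24⟩, h34, -⟩ := hdist
  have adj : ∀ x ∈ ({a₁, a₂, a₃, a₄} : Finset V), G.Adj u x ∧ G.Adj v x := by
    intro x hx
    rw [← hcommon, Finset.mem_inter, SimpleGraph.mem_neighborFinset,
      SimpleGraph.mem_neighborFinset] at hx
    exact hx
  have m1 : a₁ ∈ ({a₁, a₂, a₃, a₄} : Finset V) := by simp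
  have m2 : a₂ ∈ ({a₁, a₂, a₃, a₄} : Finset V) := by simp
  have m3 : a₃ ∈ ({a₁, a₂, a₃, a₄} : Finset V) := by simp
  have m4 : a₄ ∈ ({a₁, a₂, a₃, a₄} : Finset V) := by simp
  obtain ⟨u1, v1⟩ := adj a₁ m1
  obtain ⟨u2, v2⟩ := adj a₂ m2
  obtain ⟨u3, v3⟩ := adj a₃ m3
  obtain ⟨u4, v4⟩ := adj a₄ m4
  intro i hi
  simp only [Finset.mem_insert, Finset.mem_singleton] at hi
  have hSsub : ∀ b c d e : V, ({b, c, d, e} : Finset V) = {a₁, a₂, a₃, a₄} →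
      ({u, v, b, c, d, e} : Finset V) ⊆ {u, v, a₁, a₂, a₃, a₄} := by
    intro b c d e h x hx
    simp only [Finset.mem_insert, Finset.mem_singleton] at hx ⊢
    rcases hx with h' | h' | h' | h' | h' | h'
    · tauto
    · tauto
    all_goals
      have : x ∈ ({b, c, d, e} : Finset V) := by simp [h']
      rw [h] at this
      simp only [Finset.mem_insert, Finset.mem_singleton] at this
      tauto
  rcases hi with h | h | h | h <;> rw [h]
  · exact key_S24 G hfree u v a₁ a₂ a₃ a₄ huv u1 u2 u3 u4 v1 v2 v3 v4
      h12 h13 h14 h23 h24 h34 _ (hSsub _ _ _ _ rfl)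
  · exact key_S24 G hfree u v a₂ a₁ a₃ a₄ huv u2 u1 u3 u4 v2 v1 v3 v4
      (Ne.symm h12) h23 h24 h13 h14 h34 _ (hSsub _ _ _ _ (by
        ext x; simp; tauto))
  · exact key_S24 G hfree u v a₃ a₁ a₂ a₄ huv u3 u1 u2 u4 v3 v1 v2 v4
      (Ne.symm h13) (Ne.symm h23) h34 h12 h14 h24 _ (hSsub _ _ _ _ (by
        ext x; simp; tauto))
  · exact key_S24 G hfree u v a₄ a₁ a₂ a₃ huv u4 u1 u2 u3 v4 v1 v2 v3
      (Ne.symm h14) (Ne.symm h24) (Ne.symm h34) h12 h13 h23 _ (hSsub _ _ _ _ (by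
        ext x; simp; tauto))
end

section
/- There exists a planar S_{2,4}-free graph on 14 vertices with exactly 31 edges. -/
/-- `G` is planar: it admits a drawing in the plane with injective vertex positions,
each edge drawn as a continuous injective arc between the positions of its endpoints,
arc interiors avoiding all vertex positions, and interiors of distinct edges disjoint. -/
def IsPlanar {V : Type*} (G : SimpleGraph V) : Prop :=
  ∃ (pos : V → ℝ × ℝ) (arc : G.edgeSet → ℝ → ℝ × ℝ),
    Function.Injective pos ∧
    (∀ e, ContinuousOn (arc e) (Set.Icc 0 1)) ∧
    (∀ e, Set.InjOn (arc e) (Set.Icc 0 1)) ∧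
    (∀ e : G.edgeSet, ∃ u v, (e : Sym2 V) = s(u, v) ∧ arc e 0 = pos u ∧ arc e 1 = pos v) ∧
    (∀ e, ∀ t ∈ Set.Ioo (0 : ℝ) 1, arc e t ∉ Set.range pos) ∧
    (∀ e f : G.edgeSet, e ≠ f → ∀ s ∈ Set.Ioo (0 : ℝ) 1, ∀ t ∈ Set.Ioo (0 : ℝ) 1,
      arc e s ≠ arc f t)

section StraightLine

variable {V : Type*}

noncomputable def segmentArc (pos : V → ℝ × ℝ) (e : Sym2 V) : ℝ → ℝ × ℝ :=
  AffineMap.lineMap (pos (Quot.out e).1) (pos (Quot.out e).2)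

lemma segmentArc_mem_openSegment (pos : V → ℝ × ℝ) (e : Sym2 V) {t : ℝ}
    (ht : t ∈ Set.Ioo (0 : ℝ) 1) :
    segmentArc pos e t ∈ openSegment ℝ (pos (Quot.out e).1) (pos (Quot.out e).2) := by
  rw [openSegment_eq_image_lineMap]
  exact ⟨t, ht, rfl⟩

theorem isPlanar_of_straightLine (G : SimpleGraph V) (pos : V → ℝ × ℝ)
    (hpos : Function.Injective pos)
    (hvert : ∀ u v w, G.Adj u v → w ≠ u → w ≠ v → pos w ∉ openSegment ℝ (pos u) (pos v))
    (hedge : ∀ u v x y, G.Adj u v → G.Adj x y → s(u, v) ≠ s(x, y) →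
      Disjoint (openSegment ℝ (pos u) (pos v)) (openSegment ℝ (pos x) (pos y))) :
    IsPlanar G := by
  have hout (e : Sym2 V) : s((Quot.out e).1, (Quot.out e).2) = e := Quot.out_eq e
  have hadj (e : G.edgeSet) : G.Adj (Quot.out (e : Sym2 V)).1 (Quot.out (e : Sym2 V)).2 := by
    rw [← G.mem_edgeSet, hout]
    exact e.2
  refine ⟨pos, fun e => segmentArc pos e, hpos, fun e => ?_, fun e => ?_, fun e => ?_,
    fun e t ht => ?_, fun e f hef s hs t ht => ?_⟩
  · exact AffineMap.lineMap_continuous.continuousOn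
  · exact (AffineMap.lineMap_injective ℝ (hpos.ne (hadj e).ne)).injOn
  · exact ⟨_, _, (hout e).symm, AffineMap.lineMap_apply_zero _ _,
      AffineMap.lineMap_apply_one _ _⟩
  · rintro ⟨w, hw⟩
    dsimp only at hw
    have hmem := segmentArc_mem_openSegment pos e ht
    rw [← hw] at hmem
    refine hvert _ _ w (hadj e) (fun hu => ?_) (fun hv => ?_) hmem
    · subst hu
      exact (hadj e).ne (hpos (left_mem_openSegment_iff.mp hmem))
    · subst hv
      exact (hadj e).ne (hpos (right_mem_openSegment_iff.mp hmem))
  · have hne : s((Quot.out (e : Sym2 V)).1, (Quot.out (e : Sym2 V)).2) ≠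
        s((Quot.out (f : Sym2 V)).1, (Quot.out (f : Sym2 V)).2) := by
      rw [hout, hout]
      exact fun h => hef (Subtype.ext h)
    intro h
    dsimp only at h
    have hmem := segmentArc_mem_openSegment pos e hs
    rw [h] at hmem
    exact Set.disjoint_left.mp (hedge _ _ _ _ (hadj e) (hadj f) hne) hmem
      (segmentArc_mem_openSegment pos f ht)

end StraightLine

section Cross

variable {R : Type*} [CommRing R]

def cross (p q r : R × R) : R :=
  (q.1 - p.1) * (r.2 - p.2) - (q.2 - p.2) * (r.1 - p.1)

lemma cross_map {S : Type*} [CommRing S] (f : R →+* S) (p q r : R × R) :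
    cross (Prod.map f f p) (Prod.map f f q) (Prod.map f f r) = f (cross p q r) := by
  simp only [cross, Prod.map_fst, Prod.map_snd, map_sub, map_mul]

/-- The line through `p` and `q` misses the open segment from `r` to `s`. -/
def SegmentOffLine [PartialOrder R] (p q r s : R × R) : Prop :=
  0 ≤ cross p q r * cross p q s ∧ cross p q r + cross p q s ≠ 0

instance [PartialOrder R] [DecidableEq R] [DecidableLE R] (p q r s : R × R) :
    Decidable (SegmentOffLine p q r s) :=
  inferInstanceAs (Decidable (_ ∧ _))

lemma SegmentOffLine.intCast {p q r s : ℤ × ℤ} (h : SegmentOffLine p q r s) :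
    SegmentOffLine (Prod.map (Int.castRingHom ℝ) (Int.castRingHom ℝ) p)
      (Prod.map (Int.castRingHom ℝ) (Int.castRingHom ℝ) q)
      (Prod.map (Int.castRingHom ℝ) (Int.castRingHom ℝ) r)
      (Prod.map (Int.castRingHom ℝ) (Int.castRingHom ℝ) s) := by
  simp only [SegmentOffLine, cross_map, eq_intCast]
  exact_mod_cast h

lemma cross_add_smul (p q r s : ℝ × ℝ) {a b : ℝ} (hab : a + b = 1) :
    cross p q (a • r + b • s) = a * cross p q r + b * cross p q s := by
  simp only [cross, Prod.fst_add, Prod.snd_add, Prod.smul_fst, Prod.smul_snd, smul_eq_mul]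
  linear_combination ((q.1 - p.1) * p.2 - (q.2 - p.2) * p.1) * hab

lemma cross_eq_zero_of_mem_openSegment {p q x : ℝ × ℝ} (hx : x ∈ openSegment ℝ p q) :
    cross p q x = 0 := by
  obtain ⟨a, b, -, -, hab, rfl⟩ := hx
  rw [cross_add_smul p q p q hab]
  simp only [cross]
  ring

lemma not_mem_openSegment_of_cross_ne_zero {p q w : ℝ × ℝ} (hw : cross p q w ≠ 0) :
    w ∉ openSegment ℝ p q :=
  fun h => hw (cross_eq_zero_of_mem_openSegment h)

lemma SegmentOffLine.cross_ne_zero {p q r s x : ℝ × ℝ} (h : SegmentOffLine p q r s)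
    (hx : x ∈ openSegment ℝ r s) : cross p q x ≠ 0 := by
  obtain ⟨hsign, hsum⟩ := h
  obtain ⟨a, b, ha, hb, hab, rfl⟩ := hx
  rw [cross_add_smul p q r s hab]
  set X := cross p q r
  set Y := cross p q s
  intro h
  -- `(aX + bY)(X + Y) = aX² + bY² + XY` is a sum of nonnegative terms
  have key : a * X ^ 2 + b * Y ^ 2 + (a + b) * (X * Y) = 0 := by
    linear_combination (X + Y) * h
  have hX : a * X ^ 2 = 0 := by
    nlinarith [mul_nonneg ha.le (sq_nonneg X), mul_nonneg hb.le (sq_nonneg Y),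
      mul_nonneg (add_pos ha hb).le hsign]
  have hY : b * Y ^ 2 = 0 := by
    nlinarith [mul_nonneg ha.le (sq_nonneg X), mul_nonneg hb.le (sq_nonneg Y),
      mul_nonneg (add_pos ha hb).le hsign]
  simp only [mul_eq_zero, ha.ne', hb.ne', false_or, pow_eq_zero_iff, ne_eq,
    OfNat.ofNat_ne_zero, not_false_eq_true] at hX hY
  exact hsum (by rw [hX, hY, add_zero])

lemma SegmentOffLine.disjoint_openSegment {p q r s : ℝ × ℝ} (h : SegmentOffLine p q r s) :
    Disjoint (openSegment ℝ p q) (openSegment ℝ r s) :=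
  Set.disjoint_left.mpr fun _ hpq hrs =>
    h.cross_ne_zero hrs (cross_eq_zero_of_mem_openSegment hpq)

end Cross

theorem not_containsS24_of_card_neighborFinset_union_le {V : Type*} [Fintype V] [DecidableEq V]
    (G : SimpleGraph V) [DecidableRel G.Adj]
    (h : ∀ x y, G.Adj x y → 5 ≤ G.degree y →
      (G.neighborFinset x ∪ G.neighborFinset y).card ≤ 7) :
    ¬ ContainsS24 G := by
  rintro ⟨x, y, a, b, c, d, e, f, hxy, hxa, hxb, hyc, hyd, hye, hyf, hnodup⟩
  have hdeg : 5 ≤ G.degree y := by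
    have hsub : [x, c, d, e, f].toFinset ⊆ G.neighborFinset y := by
      simp [Finset.insert_subset_iff, hxy.symm, hyc, hyd, hye, hyf]
    have hnodup' : [x, c, d, e, f].Nodup :=
      hnodup.sublist (.cons_cons x (List.sublist_append_right [y, a, b] [c, d, e, f]))
    calc 5 = [x, c, d, e, f].toFinset.card := (List.toFinset_card_of_nodup hnodup').symm
      _ ≤ (G.neighborFinset y).card := Finset.card_le_card hsub
      _ = G.degree y := G.card_neighborFinset_eq_degree y
  have hsub : [x, y, a, b, c, d, e, f].toFinset ⊆ G.neighborFinset x ∪ G.neighborFinset y := by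
    simp [Finset.insert_subset_iff, hxy, hxy.symm, hxa, hxb, hyc, hyd, hye, hyf]
  have h8 : 8 ≤ (G.neighborFinset x ∪ G.neighborFinset y).card :=
    (List.toFinset_card_of_nodup hnodup).symm.le.trans (Finset.card_le_card hsub)
  exact absurd (h x y hxy hdeg) (by omega)

namespace OctahedronPair

/-- The octahedron on `1, …, 6` (with `4, 5, 6` opposite to `1, 2, 3`) and a vertex `0`
stacked on its face `123`. -/
def stackedOctahedronEdges : List (Fin 7 × Fin 7) :=
  [(0, 1), (0, 2), (0, 3), (1, 2), (1, 3), (2, 3), (4, 5), (4, 6), (5, 6),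
    (2, 4), (3, 4), (1, 5), (3, 5), (1, 6), (2, 6)]

def edges : List (Fin 14 × Fin 14) :=
  (0, 7) :: stackedOctahedronEdges.map (Prod.map (Fin.castAdd 7) (Fin.castAdd 7)) ++
    stackedOctahedronEdges.map (Prod.map (Fin.natAdd 7) (Fin.natAdd 7))

def graph : SimpleGraph (Fin 14) := SimpleGraph.fromRel fun u v => (u, v) ∈ edges

instance : DecidableRel graph.Adj := inferInstanceAs (DecidableRel (SimpleGraph.fromRel _).Adj)

/-- A straight-line drawing with outer face `012` and `3` inside it; the second copy is the
mirror image, so that the two vertices `0` and `7` face each other. -/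
def stackedOctahedronCoords : Fin 7 → ℤ × ℤ :=
  ![(20, 13), (0, 0), (2, 24), (9, 12), (6, 15), (6, 9), (3, 11)]

def coords : Fin 14 → ℤ × ℤ :=
  Fin.append stackedOctahedronCoords fun i =>
    (50 - (stackedOctahedronCoords i).1, (stackedOctahedronCoords i).2 + 1)

noncomputable def position (v : Fin 14) : ℝ × ℝ :=
  Prod.map (Int.castRingHom ℝ) (Int.castRingHom ℝ) (coords v)

lemma coords_injective : Function.Injective coords := by decide

lemma cross_coords_ne_zero : ∀ u v w, graph.Adj u v → w ≠ u → w ≠ v →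
    cross (coords u) (coords v) (coords w) ≠ 0 := by
  decide

lemma segmentOffLine_coords : ∀ u v x y, graph.Adj u v → graph.Adj x y → s(u, v) ≠ s(x, y) →
    SegmentOffLine (coords u) (coords v) (coords x) (coords y) ∨
      SegmentOffLine (coords x) (coords y) (coords u) (coords v) := by
  decide

theorem isPlanar : IsPlanar graph := by
  refine isPlanar_of_straightLine graph position
    ((Prod.map_injective.mpr ⟨Int.cast_injective, Int.cast_injective⟩).comp coords_injective)
    (fun u v w huv hwu hwv => ?_) (fun u v x y huv hxy hne => ?_)
  · refine not_mem_openSegment_of_cross_ne_zero ?_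
    simp only [position, cross_map, eq_intCast]
    exact_mod_cast cross_coords_ne_zero u v w huv hwu hwv
  · rcases segmentOffLine_coords u v x y huv hxy hne with h | h
    · exact h.intCast.disjoint_openSegment
    · exact h.intCast.disjoint_openSegment.symm

lemma card_neighborFinset_union_le : ∀ x y, graph.Adj x y → 5 ≤ graph.degree y →
    (graph.neighborFinset x ∪ graph.neighborFinset y).card ≤ 7 := by
  decide

lemma ncard_edgeSet : graph.edgeSet.ncard = 31 := by
  have hsum : ∑ v, graph.degree v = 62 := by decide
  rw [← SimpleGraph.coe_edgeFinset, Set.ncard_coe_finset]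
  have := graph.sum_degrees_eq_twice_card_edges
  omega

end OctahedronPair

theorem stmt_14 :
    ∃ G : SimpleGraph (Fin 14), IsPlanar G ∧ ¬ ContainsS24 G ∧
      G.edgeSet.ncard = 31 :=
  ⟨OctahedronPair.graph, OctahedronPair.isPlanar,
    not_containsS24_of_card_neighborFinset_union_le _ OctahedronPair.card_neighborFinset_union_le,
    OctahedronPair.ncard_edgeSet⟩
end

section
/- For every positive integer k there exists a planar S_{2,4}-free graph on n = 14k vertices with exactly 31k = (31/14)·n edges. -/
open SimpleGraph Finset

variable {V W ι : Type*}

structure IsStraightLineDrawing (G : SimpleGraph V) (pos : V → ℝ × ℝ) : Prop where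
  injective : Function.Injective pos
  pos_notMem_openSegment :
    ∀ ⦃u v⦄, G.Adj u v → ∀ w, pos w ∉ openSegment ℝ (pos u) (pos v)
  disjoint : ∀ ⦃u v u' v'⦄, G.Adj u v → G.Adj u' v' → s(u, v) ≠ s(u', v') →
    Disjoint (openSegment ℝ (pos u) (pos v)) (openSegment ℝ (pos u') (pos v'))

namespace IsStraightLineDrawing

variable {G : SimpleGraph V} {H : SimpleGraph W} {pos : V → ℝ × ℝ} {pos' : W → ℝ × ℝ}

theorem isPlanar (h : IsStraightLineDrawing G pos) : IsPlanar G := by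
  choose ends hends using fun e : G.edgeSet =>
    (⟨(e : Sym2 V).out, (Quot.out_eq _).symm⟩ : ∃ p : V × V, (e : Sym2 V) = s(p.1, p.2))
  have hadj (e : G.edgeSet) : G.Adj (ends e).1 (ends e).2 := by
    simpa only [hends e, mem_edgeSet] using e.2
  let arc (e : G.edgeSet) : ℝ → ℝ × ℝ :=
    AffineMap.lineMap (pos (ends e).1) (pos (ends e).2)
  have arc_mem (e : G.edgeSet) (t : ℝ) (ht : t ∈ Set.Ioo 0 1) :
      arc e t ∈ openSegment ℝ (pos (ends e).1) (pos (ends e).2) := by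
    rw [openSegment_eq_image_lineMap]
    exact Set.mem_image_of_mem _ ht
  refine ⟨pos, arc, h.injective, fun e => AffineMap.lineMap_continuous.continuousOn,
    fun e => (AffineMap.lineMap_injective ℝ (h.injective.ne (hadj e).ne)).injOn,
    fun e => ⟨_, _, hends e, AffineMap.lineMap_apply_zero .., AffineMap.lineMap_apply_one ..⟩,
    ?_, ?_⟩
  · rintro e t ht ⟨w, hw⟩
    exact h.pos_notMem_openSegment (hadj e) w (hw ▸ arc_mem e t ht)
  · intro e f hef s hs t ht hst
    refine Set.disjoint_left.1 (h.disjoint (hadj e) (hadj f) ?_) (arc_mem e s hs)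
      (hst ▸ arc_mem f t ht)
    rwa [← hends e, ← hends f, Ne, Subtype.coe_inj]

theorem comap (h : IsStraightLineDrawing H pos') (f : G ↪g H) :
    IsStraightLineDrawing G (pos' ∘ f) where
  injective := h.injective.comp f.injective
  pos_notMem_openSegment _ _ huv w := h.pos_notMem_openSegment (f.map_adj_iff.2 huv) (f w)
  disjoint _ _ _ _ huv huv' hne := h.disjoint (f.map_adj_iff.2 huv) (f.map_adj_iff.2 huv')
    (by rwa [← Sym2.map_mk, ← Sym2.map_mk, (Sym2.map.injective f.injective).ne_iff])

end IsStraightLineDrawing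

theorem SimpleGraph.boxProd_bot_adj {G : SimpleGraph V} {x y : V × ι} :
    (G □ (⊥ : SimpleGraph ι)).Adj x y ↔ G.Adj x.1 y.1 ∧ x.2 = y.2 := by
  simp [boxProd_adj]

theorem Nat.eq_of_mem_Ico_mul {w x : ℝ} {c c' : ℕ} (h : x ∈ Set.Ico (c * w) (c * w + w))
    (h' : x ∈ Set.Ico (c' * w) (c' * w + w)) : c = c' := by
  have hw : 0 ≤ w := by linarith [h.1, h.2]
  have lt_succ {a b : ℕ} (ha : x ∈ Set.Ico (a * w) (a * w + w))
      (hb : x ∈ Set.Ico (b * w) (b * w + w)) : a < b + 1 := by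
    have : (a : ℝ) < b + 1 := lt_of_mul_lt_mul_right (by linarith [ha.1, hb.2]) hw
    exact_mod_cast this
  have := lt_succ h h'
  have := lt_succ h' h
  omega

theorem fst_mem_of_mem_openSegment {s : Set ℝ} (hs : Convex ℝ s) {a b z : ℝ × ℝ}
    (ha : a.1 ∈ s) (hb : b.1 ∈ s) (hz : z ∈ openSegment ℝ a b) : z.1 ∈ s :=
  ((hs.prod convex_univ).openSegment_subset ⟨ha, trivial⟩ ⟨hb, trivial⟩ hz).1

namespace IsStraightLineDrawing

variable {G : SimpleGraph V} {pos : V → ℝ × ℝ}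

theorem boxProd_bot (h : IsStraightLineDrawing G pos) {w : ℝ}
    (hw : ∀ v, (pos v).1 ∈ Set.Ico 0 w) (k : ℕ) :
    IsStraightLineDrawing (G □ (⊥ : SimpleGraph (Fin k)))
      fun x => ((x.2 : ℕ) * w, 0) + pos x.1 := by
  set P : V × Fin k → ℝ × ℝ := fun x => ((x.2 : ℕ) * w, 0) + pos x.1
  have strip (x : V × Fin k) : (P x).1 ∈ Set.Ico ((x.2 : ℕ) * w) ((x.2 : ℕ) * w + w) := by
    have := hw x.1
    simp only [P, Prod.fst_add, Set.mem_Ico] at this ⊢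
    constructor <;> linarith [this.1, this.2]
  have seg_strip {u v : V} {c : Fin k} {z : ℝ × ℝ}
      (hz : z ∈ openSegment ℝ (P (u, c)) (P (v, c))) :
      z.1 ∈ Set.Ico ((c : ℕ) * w) ((c : ℕ) * w + w) :=
    fst_mem_of_mem_openSegment (convex_Ico _ _) (strip (u, c)) (strip (v, c)) hz
  refine ⟨?_, ?_, ?_⟩
  · rintro ⟨u, c⟩ ⟨v, d⟩ huv
    obtain rfl : c = d := Fin.ext (Nat.eq_of_mem_Ico_mul (strip (u, c)) (huv ▸ strip (v, d)))
    rw [h.injective (add_left_cancel huv : pos u = pos v)]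
  · rintro ⟨u, c⟩ ⟨v, d⟩ huv ⟨x, d'⟩ hx
    obtain ⟨huv, rfl : c = d⟩ := boxProd_bot_adj.1 huv
    obtain rfl : d' = c := Fin.ext (Nat.eq_of_mem_Ico_mul (strip (x, d')) (seg_strip hx))
    exact h.pos_notMem_openSegment huv x ((mem_openSegment_translate ℝ _).1 hx)
  · rintro ⟨u, c⟩ ⟨v, d⟩ ⟨u', c'⟩ ⟨v', d'⟩ huv huv' hne
    obtain ⟨huv, rfl : c = d⟩ := boxProd_bot_adj.1 huv
    obtain ⟨huv', rfl : c' = d'⟩ := boxProd_bot_adj.1 huv'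
    refine Set.disjoint_left.2 fun z hz hz' => ?_
    obtain rfl : c = c' := Fin.ext (Nat.eq_of_mem_Ico_mul (seg_strip hz) (seg_strip hz'))
    have hne : s(u, v) ≠ s(u', v') := fun e =>
      hne (by rw [← Sym2.map_mk (·, c), e, Sym2.map_mk])
    rw [← add_neg_cancel_left (((c : ℕ) : ℝ) * w, (0 : ℝ)) z] at hz hz'
    exact Set.disjoint_left.1 (h.disjoint huv huv' hne) ((mem_openSegment_translate ℝ _).1 hz)
      ((mem_openSegment_translate ℝ _).1 hz')

end IsStraightLineDrawing

section Orientation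

variable {R : Type*}

def orient [CommRing R] (p q r : R × R) : R :=
  (q.1 - p.1) * (r.2 - p.2) - (q.2 - p.2) * (r.1 - p.1)

-- `r` and `s` lie weakly on one side of the line `p q` and not both on it, so the open segment
-- `r s` misses that line.
def OneSideOfLine [CommRing R] [LinearOrder R] (p q r s : R × R) : Prop :=
  0 ≤ orient p q r * orient p q s ∧ orient p q r + orient p q s ≠ 0

instance [CommRing R] [LinearOrder R] (p q r s : R × R) : Decidable (OneSideOfLine p q r s) :=
  inferInstanceAs (Decidable (_ ∧ _))

theorem orient_intCast [CommRing R] (p q r : ℤ × ℤ) :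
    orient (Prod.map Int.cast Int.cast p) (Prod.map Int.cast Int.cast q)
      (Prod.map Int.cast Int.cast r) = ((orient p q r : ℤ) : R) := by
  simp [orient]

theorem OneSideOfLine.intCast [CommRing R] [LinearOrder R] [IsStrictOrderedRing R]
    {p q r s : ℤ × ℤ} (h : OneSideOfLine p q r s) :
    OneSideOfLine (R := R) (Prod.map Int.cast Int.cast p) (Prod.map Int.cast Int.cast q)
      (Prod.map Int.cast Int.cast r) (Prod.map Int.cast Int.cast s) := by
  simp only [OneSideOfLine, orient_intCast]
  exact_mod_cast h

variable [Field R] [LinearOrder R] [IsStrictOrderedRing R]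

theorem orient_add_smul {a b : R} (hab : a + b = 1) (p q r s : R × R) :
    orient p q (a • r + b • s) = a * orient p q r + b * orient p q s := by
  simp only [orient, Prod.fst_add, Prod.snd_add, Prod.smul_fst, Prod.smul_snd, smul_eq_mul]
  linear_combination ((q.1 - p.1) * p.2 - (q.2 - p.2) * p.1) * hab

theorem orient_eq_zero_of_mem_openSegment {p q z : R × R} (hz : z ∈ openSegment R p q) :
    orient p q z = 0 := by
  obtain ⟨a, b, -, -, hab, rfl⟩ := hz
  rw [orient_add_smul hab]
  simp only [orient]
  ring

theorem OneSideOfLine.orient_ne_zero {p q r s z : R × R} (h : OneSideOfLine p q r s)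
    (hz : z ∈ openSegment R r s) : orient p q z ≠ 0 := by
  obtain ⟨a, b, ha, hb, hab, rfl⟩ := hz
  obtain ⟨hαβ, hsum⟩ := h
  rw [orient_add_smul hab]
  set α := orient p q r
  set β := orient p q s
  intro h0
  have hα : α = 0 := by
    have key : a * α ^ 2 = -(b * (α * β)) := by linear_combination α * h0
    have : a * α ^ 2 = 0 :=
      le_antisymm (key ▸ neg_nonpos.2 (mul_nonneg hb.le hαβ)) (by positivity)
    simpa [ha.ne'] using this
  have hβ : β = 0 := by simpa [hα, hb.ne'] using h0
  exact hsum (by rw [hα, hβ, add_zero])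

end Orientation

theorem IsStraightLineDrawing.of_intCoords {G : SimpleGraph V} (P : V → ℤ × ℤ)
    (hinj : Function.Injective P)
    (hvert : ∀ u v w, G.Adj u v → w ≠ u → w ≠ v → orient (P u) (P v) (P w) ≠ 0)
    (hedge : ∀ u v u' v', G.Adj u v → G.Adj u' v' → s(u, v) ≠ s(u', v') →
      OneSideOfLine (P u) (P v) (P u') (P v') ∨ OneSideOfLine (P u') (P v') (P u) (P v)) :
    IsStraightLineDrawing G (Prod.map Int.cast Int.cast ∘ P) := by
  have hcast : Function.Injective (Prod.map Int.cast Int.cast : ℤ × ℤ → ℝ × ℝ) :=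
    Int.cast_injective.prodMap Int.cast_injective
  refine ⟨hcast.comp hinj, fun u v huv w hw => ?_, fun u v u' v' huv huv' hne => ?_⟩
  · by_cases hwu : w = u
    · exact (left_mem_openSegment_iff.not.2 ((hcast.comp hinj).ne huv.ne)) (hwu ▸ hw)
    by_cases hwv : w = v
    · exact (right_mem_openSegment_iff.not.2 ((hcast.comp hinj).ne huv.ne)) (hwv ▸ hw)
    refine hvert u v w huv hwu hwv ?_
    have := orient_eq_zero_of_mem_openSegment hw
    simp only [Function.comp_apply, orient_intCast] at this
    exact_mod_cast this
  · refine Set.disjoint_left.2 fun z hz hz' => ?_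
    rcases hedge u v u' v' huv huv' hne with h | h
    · exact (h.intCast.orient_ne_zero hz') (orient_eq_zero_of_mem_openSegment hz)
    · exact (h.intCast.orient_ne_zero hz) (orient_eq_zero_of_mem_openSegment hz')

namespace ContainsS24

variable {G : SimpleGraph V} {H : SimpleGraph W}

theorem map (f : G ↪g H) (h : ContainsS24 G) : ContainsS24 H := by
  obtain ⟨x, y, a, b, c, d, e, g, hxy, hxa, hxb, hyc, hyd, hye, hyg, hnd⟩ := h
  simp only [← f.map_adj_iff] at hxy hxa hxb hyc hyd hye hyg
  exact ⟨_, _, _, _, _, _, _, _, hxy, hxa, hxb, hyc, hyd, hye, hyg, hnd.map f.injective⟩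

theorem of_boxProd_bot (h : ContainsS24 (G □ (⊥ : SimpleGraph ι))) : ContainsS24 G := by
  obtain ⟨x, y, a, b, c, d, e, g, hxy, hxa, hxb, hyc, hyd, hye, hyg, hnd⟩ := h
  simp only [boxProd_bot_adj] at hxy hxa hxb hyc hyd hye hyg
  refine ⟨_, _, _, _, _, _, _, _, hxy.1, hxa.1, hxb.1, hyc.1, hyd.1, hye.1, hyg.1,
    hnd.map_on fun p hp q hq hpq => Prod.ext hpq ?_⟩
  -- the star is connected, so it lies in a single copy of `G`
  have same_copy : ∀ p ∈ [x, y, a, b, c, d, e, g], p.2 = x.2 := by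
    simp only [List.mem_cons, List.not_mem_nil, or_false]
    rintro p (rfl | rfl | rfl | rfl | rfl | rfl | rfl | rfl) <;> grind
  rw [same_copy p hp, same_copy q hq]

theorem exists_four_le_card [Fintype V] [DecidableEq V] [DecidableRel G.Adj]
    (h : ContainsS24 G) :
    ∃ x y, G.Adj x y ∧ ∃ a b, G.Adj x a ∧ G.Adj x b ∧ [y, a, b].Nodup ∧
      4 ≤ #(G.neighborFinset y \ {x, a, b}) := by
  obtain ⟨x, y, a, b, c, d, e, g, hxy, hxa, hxb, hyc, hyd, hye, hyg, hnd⟩ := h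
  refine ⟨x, y, hxy, a, b, hxa, hxb, ?_, ?_⟩
  · exact hnd.sublist (by simp : List.Sublist [y, a, b] [x, y, a, b, c, d, e, g])
  · have hcdeg : [c, d, e, g].Nodup :=
      hnd.sublist (List.sublist_append_right [x, y, a, b] _)
    calc 4 = ([c, d, e, g].toFinset).card := (List.toFinset_card_of_nodup hcdeg).symm
      _ ≤ #(G.neighborFinset y \ {x, a, b}) := card_le_card fun z hz => by
        simp only [List.toFinset_cons, List.toFinset_nil, List.nodup_cons, List.mem_cons,
          List.not_mem_nil, or_false, mem_sdiff, mem_neighborFinset, mem_insert,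
          mem_singleton] at hz hnd ⊢
        grind

end ContainsS24

theorem SimpleGraph.Iso.ncard_edgeSet_eq {G : SimpleGraph V} {H : SimpleGraph W} (e : G ≃g H) :
    G.edgeSet.ncard = H.edgeSet.ncard :=
  Nat.card_congr e.mapEdgeSet

theorem SimpleGraph.ncard_edgeSet_boxProd_bot [Fintype V] [Fintype ι] (G : SimpleGraph V) :
    (G □ (⊥ : SimpleGraph ι)).edgeSet.ncard = Fintype.card ι * G.edgeSet.ncard := by
  classical
  have hsum : ∑ x : V × ι, G.degree x.1 = 2 * #(G □ (⊥ : SimpleGraph ι)).edgeFinset := by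
    rw [← sum_degrees_eq_twice_card_edges]
    exact sum_congr rfl fun x _ => by rw [degree_boxProd, bot_degree, add_zero]
  rw [Fintype.sum_prod_type' (f := fun v _ => G.degree v)] at hsum
  simp only [sum_const, card_univ, smul_eq_mul, ← mul_sum,
    sum_degrees_eq_twice_card_edges] at hsum
  rw [← coe_edgeFinset, ← coe_edgeFinset, Set.ncard_coe_finset, Set.ncard_coe_finset]
  linarith

/-- The octahedra are on `0, …, 5` and `7, …, 12`, the extra vertices `6` and `13`. -/
def blockEdges : List (Fin 14 × Fin 14) :=
  [(0, 1), (0, 2), (0, 4), (0, 5), (0, 6), (1, 2), (1, 3), (1, 5), (1, 6), (2, 3), (2, 4),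
   (2, 6), (3, 4), (3, 5), (4, 5), (6, 13), (7, 8), (7, 9), (7, 11), (7, 12), (7, 13), (8, 9),
   (8, 10), (8, 12), (8, 13), (9, 10), (9, 11), (9, 13), (10, 11), (10, 12), (11, 12)]

def block : SimpleGraph (Fin 14) := SimpleGraph.fromRel fun u v => (u, v) ∈ blockEdges

instance : DecidableRel block.Adj := fun u v => decidable_of_iff' _ (fromRel_adj _ u v)

def blockPos : Fin 14 → ℤ × ℤ :=
  ![(0, 12), (0, -12), (6, 1), (3, -4), (3, 4), (2, 1), (12, 0),
    (30, 12), (30, -12), (24, 1), (27, -4), (27, 4), (28, 1), (18, 0)]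

theorem ncard_edgeSet_block : block.edgeSet.ncard = 31 := by
  rw [← coe_edgeFinset, Set.ncard_coe_finset]
  decide +kernel

theorem block_not_containsS24 : ¬ ContainsS24 block := fun h =>
  absurd h.exists_four_le_card (by decide +kernel)

theorem isStraightLineDrawing_block :
    IsStraightLineDrawing block (Prod.map Int.cast Int.cast ∘ blockPos) :=
  .of_intCoords blockPos (by decide +kernel) (by decide +kernel) (by decide +kernel)

theorem blockPos_fst_mem_Ico (v : Fin 14) : ((blockPos v).1 : ℝ) ∈ Set.Ico 0 31 := by
  have : 0 ≤ (blockPos v).1 ∧ (blockPos v).1 < 31 := by revert v; decide +kernel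
  exact ⟨by exact_mod_cast this.1, by exact_mod_cast this.2⟩

theorem stmt_15_general (k : ℕ) :
    ∃ G : SimpleGraph (Fin (14 * k)), IsPlanar G ∧ ¬ ContainsS24 G ∧
      G.edgeSet.ncard = 31 * k := by
  let e := Iso.map finProdFinEquiv (block □ (⊥ : SimpleGraph (Fin k)))
  refine ⟨_, ?_, fun h => block_not_containsS24 (h.map e.symm.toEmbedding).of_boxProd_bot, ?_⟩
  · exact ((isStraightLineDrawing_block.boxProd_bot blockPos_fst_mem_Ico k).comap
      e.symm.toEmbedding).isPlanar
  · rw [← e.ncard_edgeSet_eq, ncard_edgeSet_boxProd_bot, ncard_edgeSet_block, Fintype.card_fin,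
      mul_comm]

theorem stmt_15 (k : ℕ) (hk : 0 < k) :
    ∃ G : SimpleGraph (Fin (14 * k)), IsPlanar G ∧ ¬ ContainsS24 G ∧
      G.edgeSet.ncard = 31 * k :=
  stmt_15_general k
end

section
/- Let G be a simple S_{2,4}-free graph containing an induced path u–v–w with deg(u) = deg(w) = 5 and deg(v) = 3 (a 5-3-5 path), where v has a third neighbor v'. Then every neighbor of u other than v, and every neighbor of w other than v, has at most one neighbor outside the set N[u] ∪ N[w] ∪ {v'}. -/
lemma key_aux {V : Type*} [Fintype V] [DecidableEq V] (G : SimpleGraph V)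
    [DecidableRel G.Adj] (hfree : ¬ ContainsS24 G) (u x : V) (hux : G.Adj u x)
    (hu : G.degree u = 5) (T : Finset V)
    (hT : insert u (G.neighborFinset u) ⊆ T) :
    (G.neighborFinset x \ T).card ≤ 1 := by
  by_contra h
  push_neg at h
  obtain ⟨a, ha, b, hb, hab⟩ := Finset.one_lt_card.mp h
  rw [Finset.mem_sdiff, SimpleGraph.mem_neighborFinset] at ha hb
  have haN : a ∉ insert u (G.neighborFinset u) := fun hmem => ha.2 (hT hmem)
  have hbN : b ∉ insert u (G.neighborFinset u) := fun hmem => hb.2 (hT hmem)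
  simp only [Finset.mem_insert, SimpleGraph.mem_neighborFinset, not_or] at haN hbN
  set S := (G.neighborFinset u).erase x with hS
  have hScard : S.card = 4 := by
    rw [hS, Finset.card_erase_of_mem (by rwa [SimpleGraph.mem_neighborFinset]),
      SimpleGraph.card_neighborFinset_eq_degree, hu]
  have hSpos : 0 < S.card := by omega
  obtain ⟨c, hc⟩ := Finset.card_pos.mp hSpos
  have hS3 : (S.erase c).card = 3 := by
    rw [Finset.card_erase_of_mem hc, hScard]
  obtain ⟨d, e, f, hde, hdf, hef, hSdef⟩ := Finset.card_eq_three.mp hS3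
  have hd : d ∈ S.erase c := by rw [hSdef]; simp
  have he : e ∈ S.erase c := by rw [hSdef]; simp
  have hf : f ∈ S.erase c := by rw [hSdef]; simp
  have memS : ∀ y, y ∈ S → G.Adj u y ∧ y ≠ x := by
    intro y hy
    rw [hS, Finset.mem_erase, SimpleGraph.mem_neighborFinset] at hy
    exact ⟨hy.2, hy.1⟩
  have hcS := memS c hc
  have hdS := memS d (Finset.mem_of_mem_erase hd)
  have heS := memS e (Finset.mem_of_mem_erase he)
  have hfS := memS f (Finset.mem_of_mem_erase hf)
  have hdc : d ≠ c := (Finset.mem_erase.mp hd).1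
  have hec : e ≠ c := (Finset.mem_erase.mp he).1
  have hfc : f ≠ c := (Finset.mem_erase.mp hf).1
  exact hfree ⟨x, u, a, b, c, d, e, f, hux.symm, ha.1, hb.1,
    hcS.1, hdS.1, heS.1, hfS.1, by
      simp only [List.nodup_cons, List.mem_cons, List.not_mem_nil, or_false,
        List.mem_singleton, not_or, List.nodup_nil, and_true]
      refine ⟨⟨hux.ne', ha.1.ne, hb.1.ne, fun h => hcS.2 h.symm, fun h => hdS.2 h.symm,
        fun h => heS.2 h.symm, fun h => hfS.2 h.symm⟩,
        ⟨fun h => haN.1 h.symm, fun h => hbN.1 h.symm, hcS.1.ne, hdS.1.ne, heS.1.ne, hfS.1.ne⟩,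
        ⟨hab, fun h => haN.2 (h ▸ hcS.1), fun h => haN.2 (h ▸ hdS.1),
          fun h => haN.2 (h ▸ heS.1), fun h => haN.2 (h ▸ hfS.1)⟩,
        ⟨fun h => hbN.2 (h ▸ hcS.1), fun h => hbN.2 (h ▸ hdS.1),
          fun h => hbN.2 (h ▸ heS.1), fun h => hbN.2 (h ▸ hfS.1)⟩,
        ⟨fun h => hdc h.symm, fun h => hec h.symm, fun h => hfc h.symm⟩,
        ⟨hde, hdf⟩, hef, not_false⟩⟩

theorem stmt_16 {V : Type*} [Fintype V] [DecidableEq V] (G : SimpleGraph V)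
    [DecidableRel G.Adj] (hfree : ¬ ContainsS24 G)
    (u v w v' : V) (huv : G.Adj u v) (hvw : G.Adj v w) (hind : ¬ G.Adj u w)
    (hu : G.degree u = 5) (hv : G.degree v = 3) (hw : G.degree w = 5)
    (hv' : G.Adj v v') (hv'u : v' ≠ u) (hv'w : v' ≠ w) :
    ∀ x : V, ((G.Adj u x ∧ x ≠ v) ∨ (G.Adj w x ∧ x ≠ v)) →
      (G.neighborFinset x \
        (insert u (G.neighborFinset u) ∪ insert w (G.neighborFinset w) ∪ {v'})).card
        ≤ 1 := by
  intro x hx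
  rcases hx with ⟨hux, _⟩ | ⟨hwx, _⟩
  · exact key_aux G hfree u x hux hu _
      (fun y hy => Finset.mem_union_left _ (Finset.mem_union_left _ hy))
  · exact key_aux G hfree w x hwx hw _
      (fun y hy => Finset.mem_union_left _ (Finset.mem_union_right _ hy))
end
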